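/- Let E(θ, f) = ‖(∂_t + w_i∂_i)⟨∇⟩^s f‖²_{L²} − ‖v_i∂_i⟨∇⟩^s f‖²_{L²} + ½‖h⁺_i∂_i⟨∇⟩^s f‖²_{L²} + ½‖h⁻_i∂_i⟨∇⟩^s f‖²_{L²} where θ = ∂_t f, with constant coefficient vectors w, v, h⁺, h⁻ ∈ ℝ² satisfying 2[(h⁺·ξ)² + (h⁻·ξ)²] − 4(v·ξ)² ≥ 4c₀|ξ|² for all ξ. Then there is a constant C depending only on c₀ and the norms of the coefficients such that ‖∂_t f‖²_{H^{s−1/2}} + ‖f‖²_{H^{s+1/2}} ≤ C(E(∂_t f, f) + ‖∂_t f‖²_{L²} + ‖f‖²_{L²}) for all smooth f on 𝕋². -/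

import Mathlib

noncomputable section

/-- `|ξ|²` for a frequency `ξ ∈ ℤ²` -/
def zsq (ξ : Fin 2 → ℤ) : ℝ := ∑ i, ((ξ i : ℝ))^2

/-- Sobolev weight `⟨ξ⟩^{2s} = (1+|ξ|²)^s` -/
def wgt (s : ℝ) (ξ : Fin 2 → ℤ) : ℝ := (1 + zsq ξ) ^ s

def dotz (w : Fin 2 → ℝ) (ξ : Fin 2 → ℤ) : ℝ := ∑ i, w i * (ξ i : ℝ)

/-- squared Sobolev norm `‖f‖²_{H^s}` of a function on `𝕋²` given by its Fourier
coefficients `c` -/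
def sobSq (s : ℝ) (c : (Fin 2 → ℤ) → ℂ) : ℝ := ∑' ξ, wgt s ξ * ‖c ξ‖^2

/-- the `ξ`-th Fourier mode of the energy functional
`E(θ,f) = ‖(∂_t + w·∇)⟨∇⟩^s f‖² − ‖v·∇⟨∇⟩^s f‖² + ½‖h⁺·∇⟨∇⟩^s f‖² + ½‖h⁻·∇⟨∇⟩^s f‖²`,
where `c`, `d` are the Fourier coefficients of `f` and `θ = ∂_t f`. -/
def esum (s : ℝ) (w v hp hm : Fin 2 → ℝ) (c d : (Fin 2 → ℤ) → ℂ)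
    (ξ : Fin 2 → ℤ) : ℝ :=
  wgt s ξ * (‖d ξ + Complex.I * (dotz w ξ) * c ξ‖^2
    - (dotz v ξ)^2 * ‖c ξ‖^2
    + (1/2)*(dotz hp ξ)^2 * ‖c ξ‖^2 + (1/2)*(dotz hm ξ)^2 * ‖c ξ‖^2)

/-!
Everything is diagonal in Fourier space, so it suffices to prove the inequality mode by mode with a
uniform constant and sum. At the frequency `ξ` write `P = d + i (w·ξ) c` for the transported time
derivative. The stability condition makes the energy mode at least `⟨ξ⟩^{2s} (|P|² + c₀ |ξ|² |c|²)`.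
This controls `⟨ξ⟩^{2s-1} |d|² ≤ ⟨ξ⟩^{2s} (2|P|² + 2|w|²|ξ|²|c|²)` and, away from `ξ = 0` where
`1 + |ξ|² ≤ 2|ξ|²`, also `⟨ξ⟩^{2s+1} |c|² ≤ 2 ⟨ξ⟩^{2s} |ξ|² |c|²`; the zero mode is paid for by
the `L²` term.
-/

lemma zsq_nonneg (ξ : Fin 2 → ℤ) : 0 ≤ zsq ξ :=
  Finset.sum_nonneg fun _ _ => sq_nonneg _

lemma zsq_eq_zero_or_one_le (ξ : Fin 2 → ℤ) : zsq ξ = 0 ∨ 1 ≤ zsq ξ := by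
  by_cases h : ∀ i, ξ i = 0
  · left
    simp [zsq, h]
  · right
    obtain ⟨i, hi⟩ := not_forall.mp h
    have hξi : (1 : ℝ) ≤ (ξ i : ℝ) ^ 2 := by
      have : (1 : ℤ) ≤ ξ i ^ 2 := by nlinarith [Int.one_le_abs hi, sq_abs (ξ i)]
      exact_mod_cast this
    exact hξi.trans
      (Finset.single_le_sum (f := fun j => (ξ j : ℝ) ^ 2) (fun _ _ => sq_nonneg _)
        (Finset.mem_univ i))

lemma one_le_one_add_zsq (ξ : Fin 2 → ℤ) : 1 ≤ 1 + zsq ξ :=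
  le_add_of_nonneg_right (zsq_nonneg ξ)

lemma wgt_nonneg (t : ℝ) (ξ : Fin 2 → ℤ) : 0 ≤ wgt t ξ :=
  Real.rpow_nonneg (zero_le_one.trans (one_le_one_add_zsq ξ)) t

lemma wgt_zero (ξ : Fin 2 → ℤ) : wgt 0 ξ = 1 :=
  Real.rpow_zero _

lemma wgt_mono {t u : ℝ} (h : t ≤ u) (ξ : Fin 2 → ℤ) : wgt t ξ ≤ wgt u ξ :=
  Real.rpow_le_rpow_of_exponent_le (one_le_one_add_zsq ξ) h

lemma wgt_add_one (t : ℝ) (ξ : Fin 2 → ℤ) : wgt (t + 1) ξ = wgt t ξ * (1 + zsq ξ) := by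
  rw [wgt, wgt, Real.rpow_add (zero_lt_one.trans_le (one_le_one_add_zsq ξ)), Real.rpow_one]

lemma wgt_add_half_le (t : ℝ) (ξ : Fin 2 → ℤ) : wgt (t + 1/2) ξ ≤ 2 * zsq ξ * wgt t ξ + 1 := by
  rcases zsq_eq_zero_or_one_le ξ with h0 | h1
  · simp [wgt, h0]
  · calc wgt (t + 1/2) ξ ≤ wgt (t + 1) ξ := wgt_mono (by norm_num) ξ
      _ = wgt t ξ * (1 + zsq ξ) := wgt_add_one t ξ
      _ ≤ wgt t ξ * (2 * zsq ξ) := mul_le_mul_of_nonneg_left (by linarith) (wgt_nonneg t ξ)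
      _ ≤ 2 * zsq ξ * wgt t ξ + 1 := by linarith

lemma dotz_sq_le (w : Fin 2 → ℝ) (ξ : Fin 2 → ℤ) : dotz w ξ ^ 2 ≤ (∑ i, w i ^ 2) * zsq ξ :=
  Finset.sum_mul_sq_le_sq_mul_sq _ _ _

lemma summable_wgt_mul_of_le {t u : ℝ} (htu : t ≤ u) {c : (Fin 2 → ℤ) → ℂ}
    (hc : Summable fun ξ => wgt u ξ * ‖c ξ‖ ^ 2) : Summable fun ξ => wgt t ξ * ‖c ξ‖ ^ 2 :=
  hc.of_nonneg_of_le (fun ξ => mul_nonneg (wgt_nonneg t ξ) (sq_nonneg _))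
    fun ξ => mul_le_mul_of_nonneg_right (wgt_mono htu ξ) (sq_nonneg _)

lemma norm_sq_le_two_mul_norm_add_sq_add_norm_sq {E : Type*} [SeminormedAddCommGroup E]
    (a b : E) : ‖a‖ ^ 2 ≤ 2 * (‖a + b‖ ^ 2 + ‖b‖ ^ 2) := by
  have h : ‖a‖ ≤ ‖a + b‖ + ‖b‖ := by simpa using norm_sub_le (a + b) b
  exact (pow_le_pow_left₀ (norm_nonneg a) h 2).trans add_sq_le

lemma esum_ge {s c₀ : ℝ} {w v hp hm : Fin 2 → ℝ} {ξ : Fin 2 → ℤ}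
    (hstab : c₀ * zsq ξ ≤ 1/2 * dotz hp ξ ^ 2 + 1/2 * dotz hm ξ ^ 2 - dotz v ξ ^ 2)
    (c d : (Fin 2 → ℤ) → ℂ) :
    wgt s ξ * (‖d ξ + Complex.I * dotz w ξ * c ξ‖ ^ 2 + c₀ * zsq ξ * ‖c ξ‖ ^ 2)
      ≤ esum s w v hp hm c d ξ := by
  rw [esum]
  gcongr ?_ * ?_
  · exact wgt_nonneg s ξ
  · nlinarith [mul_le_mul_of_nonneg_right hstab (sq_nonneg ‖c ξ‖)]

lemma sobSq_zero (c : (Fin 2 → ℤ) → ℂ) : sobSq 0 c = ∑' ξ, ‖c ξ‖ ^ 2 := by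
  simp only [sobSq, wgt_zero, one_mul]

def coercivityConst (c₀ : ℝ) (w : Fin 2 → ℝ) : ℝ := 2 + 2 * (∑ i, w i ^ 2 + 1) / c₀

lemma coercivityConst_pos {c₀ : ℝ} (hc : 0 < c₀) (w : Fin 2 → ℝ) : 0 < coercivityConst c₀ w := by
  unfold coercivityConst
  have : 0 ≤ ∑ i, w i ^ 2 := Finset.sum_nonneg fun _ _ => sq_nonneg _
  positivity

lemma two_le_coercivityConst {c₀ : ℝ} (hc : 0 < c₀) (w : Fin 2 → ℝ) :
    2 ≤ coercivityConst c₀ w := by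
  unfold coercivityConst
  have : 0 ≤ ∑ i, w i ^ 2 := Finset.sum_nonneg fun _ _ => sq_nonneg _
  have : 0 ≤ 2 * (∑ i, w i ^ 2 + 1) / c₀ := by positivity
  linarith

lemma coercivityConst_mul {c₀ : ℝ} (hc : 0 < c₀) (w : Fin 2 → ℝ) :
    2 * (∑ i, w i ^ 2 + 1) ≤ coercivityConst c₀ w * c₀ := by
  unfold coercivityConst
  rw [add_mul, div_mul_cancel₀ _ hc.ne']
  linarith

lemma wgt_mul_norm_sq_le_coercivityConst_mul {s c₀ : ℝ} (hc : 0 < c₀) {w v hp hm : Fin 2 → ℝ}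
    {ξ : Fin 2 → ℤ}
    (hstab : c₀ * zsq ξ ≤ 1/2 * dotz hp ξ ^ 2 + 1/2 * dotz hm ξ ^ 2 - dotz v ξ ^ 2)
    (c d : (Fin 2 → ℤ) → ℂ) :
    wgt (s - 1/2) ξ * ‖d ξ‖ ^ 2 + wgt (s + 1/2) ξ * ‖c ξ‖ ^ 2
      ≤ coercivityConst c₀ w * (esum s w v hp hm c d ξ + ‖d ξ‖ ^ 2 + ‖c ξ‖ ^ 2) := by
  set K := coercivityConst c₀ w
  set A := wgt s ξ
  set q := zsq ξ
  set W := ∑ i, w i ^ 2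
  set P := ‖d ξ + Complex.I * dotz w ξ * c ξ‖
  have hA : 0 ≤ A := wgt_nonneg s ξ
  have hq : 0 ≤ q := zsq_nonneg ξ
  have hE := esum_ge (s := s) (w := w) hstab c d
  have hD : ‖d ξ‖ ^ 2 ≤ 2 * (P ^ 2 + W * q * ‖c ξ‖ ^ 2) := by
    have hb : ‖Complex.I * dotz w ξ * c ξ‖ ^ 2 ≤ W * q * ‖c ξ‖ ^ 2 := by
      rw [norm_mul, norm_mul, Complex.norm_I, Complex.norm_real, one_mul, mul_pow,
        Real.norm_eq_abs, sq_abs]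
      exact mul_le_mul_of_nonneg_right (dotz_sq_le w ξ) (sq_nonneg _)
    calc ‖d ξ‖ ^ 2 ≤ 2 * (P ^ 2 + ‖Complex.I * dotz w ξ * c ξ‖ ^ 2) :=
          norm_sq_le_two_mul_norm_add_sq_add_norm_sq _ _
      _ ≤ 2 * (P ^ 2 + W * q * ‖c ξ‖ ^ 2) := by gcongr
  have hK : 2 ≤ K := two_le_coercivityConst hc w
  have hKc : 2 * (W + 1) ≤ K * c₀ := coercivityConst_mul hc w
  calc wgt (s - 1/2) ξ * ‖d ξ‖ ^ 2 + wgt (s + 1/2) ξ * ‖c ξ‖ ^ 2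
      ≤ A * ‖d ξ‖ ^ 2 + (2 * q * A + 1) * ‖c ξ‖ ^ 2 := by
        gcongr
        · exact wgt_mono (by linarith) ξ
        · exact wgt_add_half_le s ξ
    _ ≤ A * (2 * (P ^ 2 + W * q * ‖c ξ‖ ^ 2)) + (2 * q * A + 1) * ‖c ξ‖ ^ 2 := by gcongr
    _ = 2 * (A * P ^ 2) + 2 * (W + 1) * (A * q * ‖c ξ‖ ^ 2) + ‖c ξ‖ ^ 2 := by ring
    _ ≤ K * (A * P ^ 2) + K * c₀ * (A * q * ‖c ξ‖ ^ 2) + ‖c ξ‖ ^ 2 := by gcongr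
    _ = K * (A * (P ^ 2 + c₀ * q * ‖c ξ‖ ^ 2)) + ‖c ξ‖ ^ 2 := by ring
    _ ≤ K * esum s w v hp hm c d ξ + ‖c ξ‖ ^ 2 := by gcongr
    _ ≤ K * (esum s w v hp hm c d ξ + ‖d ξ‖ ^ 2 + ‖c ξ‖ ^ 2) := by
        nlinarith [sq_nonneg ‖d ξ‖, sq_nonneg ‖c ξ‖]

/-- Coercivity of the energy functional under the stability condition:
`‖∂_t f‖²_{H^{s−1/2}} + ‖f‖²_{H^{s+1/2}} ≤ C(E(∂_t f, f) + ‖∂_t f‖²_{L²} + ‖f‖²_{L²})`. -/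
theorem stmt11 (s : ℝ) (hs : (1/2 : ℝ) ≤ s) (c₀ : ℝ) (hc : 0 < c₀)
    (w v hp hm : Fin 2 → ℝ)
    (hstab : ∀ ξ : Fin 2 → ℝ,
      4*c₀*(∑ i, (ξ i)^2)
        ≤ 2*((∑ i, hp i * ξ i)^2 + (∑ i, hm i * ξ i)^2) - 4*(∑ i, v i * ξ i)^2) :
    ∃ C > 0, ∀ c d : (Fin 2 → ℤ) → ℂ,
      Summable (fun ξ => wgt (s + 1/2) ξ * ‖c ξ‖^2) →
      Summable (fun ξ => wgt (s - 1/2) ξ * ‖d ξ‖^2) →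
      Summable (esum s w v hp hm c d) →
      sobSq (s - 1/2) d + sobSq (s + 1/2) c
        ≤ C * ((∑' ξ, esum s w v hp hm c d ξ) + sobSq 0 d + sobSq 0 c) := by
  refine ⟨coercivityConst c₀ w, coercivityConst_pos hc w, fun c d hc1 hd1 he => ?_⟩
  have hstab_int (ξ : Fin 2 → ℤ) :
      c₀ * zsq ξ ≤ 1/2 * dotz hp ξ ^ 2 + 1/2 * dotz hm ξ ^ 2 - dotz v ξ ^ 2 := by
    have := hstab fun i => (ξ i : ℝ)
    simp only [zsq, dotz]
    linarith
  have hd0 : Summable fun ξ => ‖d ξ‖ ^ 2 := by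
    simpa only [wgt_zero, one_mul] using summable_wgt_mul_of_le (t := 0) (by linarith) hd1
  have hc0 : Summable fun ξ => ‖c ξ‖ ^ 2 := by
    simpa only [wgt_zero, one_mul] using summable_wgt_mul_of_le (t := 0) (by linarith) hc1
  calc sobSq (s - 1/2) d + sobSq (s + 1/2) c
      = ∑' ξ, (wgt (s - 1/2) ξ * ‖d ξ‖ ^ 2 + wgt (s + 1/2) ξ * ‖c ξ‖ ^ 2) :=
        (hd1.tsum_add hc1).symm
    _ ≤ ∑' ξ, coercivityConst c₀ w * (esum s w v hp hm c d ξ + ‖d ξ‖ ^ 2 + ‖c ξ‖ ^ 2) :=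
        (hd1.add hc1).tsum_le_tsum
          (fun ξ => wgt_mul_norm_sq_le_coercivityConst_mul hc (hstab_int ξ) c d)
          (((he.add hd0).add hc0).mul_left _)
    _ = coercivityConst c₀ w * ((∑' ξ, esum s w v hp hm c d ξ) + sobSq 0 d + sobSq 0 c) := by
        rw [tsum_mul_left, (he.add hd0).tsum_add hc0, he.tsum_add hd0, sobSq_zero, sobSq_zero]
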